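/- Let α = ∑_{k=0}^∞ 2^{-n_k} with (n_k) constructed as in the paper (n_0 = 1, n_{k+1} = 4π_k, π_k the last prime of a Shiu string of length n_k modulo 2^{n_k}). Then for every positive integer h, lim_{N→∞} sup_{m∈ℕ} |N^{-1} ∑_{n=1}^N e(hα p_{n+m})| = 1. -/

import Mathlib

/-- `primeSeq n` is the `n`-th prime, with `primeSeq 1 = 2`. -/
noncomputable def primeSeq (n : ℕ) : ℕ := Nat.nth Nat.Prime (n - 1)

lemma aux_abs_exp (x : ℝ) :
    ‖Complex.exp (2 * Real.pi * Complex.I * (x:ℂ))‖ = 1 := by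
  have h1 : (2 * (Real.pi:ℂ) * Complex.I * (x:ℂ)) = ((2*Real.pi*x : ℝ):ℂ) * Complex.I := by
    push_cast; ring
  rw [h1, Complex.norm_exp_ofReal_mul_I]

lemma aux_exp_sub_one {y : ℝ} (hy : |2 * Real.pi * y| ≤ 1) :
    ‖Complex.exp (2 * Real.pi * Complex.I * (y:ℂ)) - 1‖ ≤ 2 * |2 * Real.pi * y| := by
  have h1 : (2 * (Real.pi:ℂ) * Complex.I * (y:ℂ)) = ((2*Real.pi*y : ℝ):ℂ) * Complex.I := by
    push_cast; ring
  have h2 : ‖((2*Real.pi*y : ℝ):ℂ) * Complex.I‖ = |2*Real.pi*y| := by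
    rw [norm_mul, Complex.norm_I, Complex.norm_real, Real.norm_eq_abs, mul_one]
  rw [h1]
  have := Complex.norm_exp_sub_one_le (x := ((2*Real.pi*y : ℝ):ℂ) * Complex.I) (by rw [h2]; exact hy)
  rwa [h2] at this

/-- with the paper's construction (Shiu strings assumed), for every
`h ≥ 1` one has `lim_{N→∞} sup_m |N⁻¹ ∑_{n=1}^N e(h α p_{n+m})| = 1`. -/
theorem stmt18 (m : ℕ → ℕ)
    (hShiu : ∀ n : ℕ, ∀ i, 1 ≤ i → i ≤ n → primeSeq (m n + i) ≡ 1 [MOD 2 ^ n])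
    (nseq : ℕ → ℕ) (h0 : nseq 0 = 1)
    (hrec : ∀ k, nseq (k + 1) = 4 * primeSeq (m (nseq k) + nseq k))
    (α : ℝ) (hα : α = ∑' k : ℕ, ((2:ℝ) ^ nseq k)⁻¹) :
    ∀ h : ℕ, 1 ≤ h → Filter.Tendsto (fun N : ℕ => ⨆ mm : ℕ,
      ‖(N:ℂ)⁻¹ * ∑ n ∈ Finset.Icc 1 N,
        Complex.exp (2 * Real.pi * Complex.I *
          (((h:ℝ) * α * primeSeq (n + mm) : ℝ) : ℂ))‖)
      Filter.atTop (nhds 1) := by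
  intro h hh
  set g : ℕ → ℝ := fun j => ((2:ℝ) ^ nseq j)⁻¹ with hgdef
  have hp : ∀ j : ℕ, (primeSeq j).Prime := fun j => Nat.prime_nth_prime _
  have hpmono : ∀ {a b : ℕ}, a ≤ b → primeSeq a ≤ primeSeq b := by
    intro a b hab
    exact (Nat.nth_le_nth Nat.infinite_setOf_prime).2 (by omega)
  have hpos : ∀ k, 1 ≤ nseq k := by
    intro k
    cases k with
    | zero => omega
    | succ k => rw [hrec]; have := (hp (m (nseq k) + nseq k)).two_le; omega
  have hQbig : ∀ k, 2 ^ nseq k + 1 ≤ primeSeq (m (nseq k) + nseq k) := by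
    intro k
    have hmod := hShiu (nseq k) (nseq k) (hpos k) le_rfl
    have h2 : 2 ≤ primeSeq (m (nseq k) + nseq k) := (hp _).two_le
    have hdvd : 2 ^ nseq k ∣ primeSeq (m (nseq k) + nseq k) - 1 :=
      (Nat.modEq_iff_dvd' (by omega)).1 hmod.symm
    rcases hdvd with ⟨t, ht⟩
    have ht0 : t ≠ 0 := by rintro rfl; omega
    have : 2 ^ nseq k * 1 ≤ 2 ^ nseq k * t := Nat.mul_le_mul_left _ (by omega)
    omega
  have hlt : ∀ k, nseq k < nseq (k + 1) := by
    intro k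
    rw [hrec]
    have h1 := hQbig k
    have h2 : nseq k < 2 ^ nseq k := Nat.lt_two_pow_self
    omega
  have hmono : StrictMono nseq := strictMono_nat_of_lt_succ hlt
  have hge : ∀ k, k + 1 ≤ nseq k := by
    intro k
    induction k with
    | zero => omega
    | succ n ih => have := hlt n; omega
  have hgnn : ∀ j, 0 ≤ g j := fun j => by positivity
  have hgeq : ∀ j, g j = (2:ℝ)⁻¹ ^ nseq j := by
    intro j; rw [hgdef]; simp [inv_pow]
  have hgle : ∀ j, g j ≤ (2:ℝ)⁻¹ ^ j := by
    intro j
    rw [hgeq]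
    exact pow_le_pow_of_le_one (by norm_num) (by norm_num) (by have := hge j; omega)
  have hsum : Summable g :=
    Summable.of_nonneg_of_le hgnn hgle (summable_geometric_of_lt_one (by norm_num) (by norm_num))
  set S : ℕ → ℝ := fun k => ∑ j ∈ Finset.range (k+1), g j with hSdef
  set T : ℕ → ℝ := fun k => ∑' j, g (j + (k+1)) with hTdef
  have hsum' : ∀ k, Summable fun j => g (j + (k+1)) := fun k => (summable_nat_add_iff (k+1)).2 hsum
  have hST : ∀ k, α = S k + T k := by
    intro k
    rw [hα, ← hsum.sum_add_tsum_nat_add (k+1)]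
  have hTnn : ∀ k, 0 ≤ T k := fun k => tsum_nonneg fun j => hgnn _
  have hTle : ∀ k, T k ≤ 2 * ((2:ℝ) ^ nseq (k+1))⁻¹ := by
    intro k
    have h1 : ∀ j : ℕ, g (j + (k+1)) ≤ (2:ℝ)⁻¹ ^ (nseq (k+1) + j) := by
      intro j
      have hj : nseq (k+1) + j ≤ nseq (j + (k+1)) := by
        induction j with
        | zero => simp
        | succ i ih =>
          have := hlt (i + (k+1))
          have h2 : i + 1 + (k+1) = (i + (k+1)) + 1 := by omega
          rw [h2]
          omega
      rw [hgeq]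
      exact pow_le_pow_of_le_one (by norm_num) (by norm_num) hj
    have h2 : Summable fun j : ℕ => (2:ℝ)⁻¹ ^ (nseq (k+1) + j) := by
      simpa [pow_add] using
        (summable_geometric_of_lt_one (r := (2:ℝ)⁻¹) (by norm_num) (by norm_num)).mul_left
          ((2:ℝ)⁻¹ ^ nseq (k+1))
    calc T k ≤ ∑' j, (2:ℝ)⁻¹ ^ (nseq (k+1) + j) := Summable.tsum_le_tsum h1 (hsum' k) h2
      _ = (2:ℝ)⁻¹ ^ nseq (k+1) * ∑' j : ℕ, (2:ℝ)⁻¹ ^ j := by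
          rw [← tsum_mul_left]
          congr 1
          funext j
          rw [pow_add]
      _ = 2 * ((2:ℝ) ^ nseq (k+1))⁻¹ := by
          rw [tsum_geometric_of_lt_one (by norm_num) (by norm_num), inv_pow]
          norm_num
          ring
  -- upper bound
  have hub : ∀ (N mm : ℕ), ‖(N:ℂ)⁻¹ * ∑ n ∈ Finset.Icc 1 N,
      Complex.exp (2 * Real.pi * Complex.I *
        (((h:ℝ) * α * primeSeq (n + mm) : ℝ) : ℂ))‖ ≤ 1 := by
    intro N mm
    rw [norm_mul]
    have h1 : ‖∑ n ∈ Finset.Icc 1 N,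
        Complex.exp (2 * Real.pi * Complex.I *
          (((h:ℝ) * α * primeSeq (n + mm) : ℝ) : ℂ))‖ ≤ N := by
      calc ‖∑ n ∈ Finset.Icc 1 N, Complex.exp (2 * Real.pi * Complex.I *
              (((h:ℝ) * α * primeSeq (n + mm) : ℝ) : ℂ))‖
          ≤ ∑ n ∈ Finset.Icc 1 N, ‖Complex.exp (2 * Real.pi * Complex.I *
              (((h:ℝ) * α * primeSeq (n + mm) : ℝ) : ℂ))‖ := norm_sum_le _ _
        _ = ∑ n ∈ Finset.Icc 1 N, (1:ℝ) := by
            apply Finset.sum_congr rfl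
            intro n _
            exact aux_abs_exp _
        _ = N := by
            rw [Finset.sum_const, Nat.card_Icc]
            simp
    have h2 : ‖(N:ℂ)⁻¹‖ = ((N:ℝ))⁻¹ := by
      rw [norm_inv, Complex.norm_natCast]
    rw [h2]
    rcases Nat.eq_zero_or_pos N with hN | hN
    · subst hN; simp
    · have hNpos : (0:ℝ) < N := by exact_mod_cast hN
      calc ((N:ℝ))⁻¹ * ‖_‖ ≤ ((N:ℝ))⁻¹ * N :=
            mul_le_mul_of_nonneg_left h1 (by positivity)
        _ = 1 := by field_simp
  have hBdd : ∀ N : ℕ, BddAbove (Set.range fun mm : ℕ =>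
      ‖(N:ℂ)⁻¹ * ∑ n ∈ Finset.Icc 1 N,
        Complex.exp (2 * Real.pi * Complex.I *
          (((h:ℝ) * α * primeSeq (n + mm) : ℝ) : ℂ))‖) := by
    intro N
    refine ⟨1, ?_⟩
    rintro x ⟨mm, rfl⟩
    exact hub N mm
  -- key lower bound
  have key : ∀ N : ℕ, 1 ≤ N → 1 - 1/(N:ℝ) ≤ ⨆ mm : ℕ,
      ‖(N:ℂ)⁻¹ * ∑ n ∈ Finset.Icc 1 N,
        Complex.exp (2 * Real.pi * Complex.I *
          (((h:ℝ) * α * primeSeq (n + mm) : ℝ) : ℂ))‖ := by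
    intro N hN
    have hπpos := Real.pi_pos
    have hh1 : (1:ℝ) ≤ h := by exact_mod_cast hh
    have hNpos : (0:ℝ) < N := by exact_mod_cast hN
    obtain ⟨k0, hk0⟩ := exists_nat_gt (8 * Real.pi * h * N : ℝ)
    set k := max N k0 with hkdef
    set mm0 := m (nseq k) with hmm0
    set Q := primeSeq (mm0 + nseq k) with hQdef
    set ε := 2 * Real.pi * h * T k * Q with hεdef
    have hTk := hTnn k
    have hεnn : 0 ≤ ε := by
      rw [hεdef]
      exact mul_nonneg (mul_nonneg (by positivity) hTk) (by positivity)
    have hNk : N ≤ nseq k := by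
      have h1 : N ≤ k := le_max_left _ _
      have := hge k
      omega
    have hkQ : k ≤ Q := by
      have h1 := hQbig k
      rw [← hmm0] at h1
      have h2 : nseq k < 2 ^ nseq k := Nat.lt_two_pow_self
      have := hge k
      omega
    have hT4 : T k ≤ 2 * ((2:ℝ) ^ (4 * Q))⁻¹ := by
      have h1 := hTle k
      rw [hrec k] at h1
      exact h1
    have hQle : (Q:ℝ) ≤ 2 ^ Q := by exact_mod_cast (Nat.lt_two_pow_self (n := Q)).le
    have h2k : (8 * Real.pi * h * N : ℝ) ≤ 2 ^ k := by
      have h1 : (k:ℝ) ≤ 2 ^ k := by exact_mod_cast (Nat.lt_two_pow_self (n := k)).le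
      have h2 : (k0:ℝ) ≤ k := by exact_mod_cast le_max_right N k0
      linarith
    have hεN : 2 * ε ≤ 1 / N := by
      have hc1 : 2 * ε ≤ 8 * Real.pi * h * ((Q:ℝ) / 2 ^ (4*Q)) := by
        rw [hεdef]
        have h1 : 2 * (2 * Real.pi * h * T k * Q) = (2 * Real.pi * h * (Q:ℝ) * 2) * T k := by ring
        rw [h1]
        calc (2 * Real.pi * h * (Q:ℝ) * 2) * T k
            ≤ (2 * Real.pi * h * (Q:ℝ) * 2) * (2 * ((2:ℝ) ^ (4 * Q))⁻¹) :=
              mul_le_mul_of_nonneg_left hT4 (by positivity)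
          _ = 8 * Real.pi * h * ((Q:ℝ) / 2 ^ (4*Q)) := by
              rw [div_eq_mul_inv]; ring
      have hc2 : (Q:ℝ) / 2 ^ (4*Q) ≤ 1 / 2 ^ k := by
        have e1 : (2:ℝ) ^ (4*Q) = 2 ^ Q * 2 ^ (3*Q) := by
          rw [← pow_add]
          congr 1
          omega
        have h3 : (Q:ℝ) / 2 ^ (4*Q) ≤ (2:ℝ)^Q / 2 ^ (4*Q) := by gcongr
        have h4 : (2:ℝ)^Q / 2^(4*Q) = 1 / 2^(3*Q) := by
          rw [e1]
          field_simp
        have h5 : (1:ℝ) / 2^(3*Q) ≤ 1/2^k := by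
          gcongr
          · norm_num
          · omega
        linarith
      calc 2*ε ≤ 8*Real.pi*h*((Q:ℝ)/2^(4*Q)) := hc1
        _ ≤ 8*Real.pi*h*(1/2^k) := mul_le_mul_of_nonneg_left hc2 (by positivity)
        _ = 8*Real.pi*h/2^k := by ring
        _ ≤ 8*Real.pi*h/(8*Real.pi*h*N) := by
            exact div_le_div_of_nonneg_left (by positivity) (by positivity) h2k
        _ = 1/N := by
            rw [div_mul_eq_div_div, div_self (by positivity : (0:ℝ) < 8*Real.pi*h).ne']
      
    have h1N : (1:ℝ)/N ≤ 1 := by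
      rw [div_le_one hNpos]
      exact_mod_cast hN
    have hε1 : ε ≤ 1 := by linarith
    set c : ℂ := Complex.exp (2 * Real.pi * Complex.I * (((h:ℝ) * S k : ℝ):ℂ)) with hcdef
    have hterm : ∀ n ∈ Finset.Icc 1 N,
        ‖Complex.exp (2 * Real.pi * Complex.I *
          (((h:ℝ) * α * primeSeq (n + mm0) : ℝ) : ℂ)) - c‖ ≤ 2*ε := by
      intro n hn
      rw [Finset.mem_Icc] at hn
      set p := primeSeq (n + mm0) with hpdef
      have hmod : p ≡ 1 [MOD 2 ^ nseq k] := by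
        have := hShiu (nseq k) n hn.1 (hn.2.trans hNk)
        rw [hpdef, Nat.add_comm n mm0]
        exact this
      have hp2 : 2 ≤ p := (hp _).two_le
      have hdvd : ∀ j, j ≤ k → 2 ^ nseq j ∣ p - 1 := by
        intro j hj
        have h1 : 2 ^ nseq k ∣ p - 1 := (Nat.modEq_iff_dvd' (by omega)).1 hmod.symm
        exact dvd_trans (pow_dvd_pow 2 (hmono.monotone hj)) h1
      set M : ℕ := h * ∑ j ∈ Finset.range (k+1), (p-1) / 2 ^ nseq j with hMdef
      have hSM : S k * ((p-1 : ℕ):ℝ) = ((∑ j ∈ Finset.range (k+1), (p-1) / 2 ^ nseq j : ℕ) : ℝ) := by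
        rw [hSdef]
        rw [Nat.cast_sum, Finset.sum_mul]
        apply Finset.sum_congr rfl
        intro j hj
        rw [Finset.mem_range] at hj
        rw [Nat.cast_div (hdvd j (by omega)) (by positivity)]
        rw [hgdef]
        push_cast
        rw [inv_mul_eq_div]
      have hreal : (h:ℝ) * α * p = ((h:ℝ) * S k) + ((h:ℝ) * T k * p) + (M:ℝ) := by
        have e1 : (h:ℝ) * α * p = (h:ℝ) * S k * p + (h:ℝ) * T k * p := by
          rw [hST k]; ring
        have hpcast : ((p:ℝ)) = ((p-1 : ℕ):ℝ) + 1 := by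
          rw [Nat.cast_sub (by omega)]
          push_cast
          ring
        have e2 : (h:ℝ) * S k * p = (h:ℝ) * S k + (h:ℝ) * (S k * ((p-1:ℕ):ℝ)) := by
          rw [hpcast]; ring
        rw [e1, e2, hSM, hMdef]
        push_cast
        ring
      have hcast : (((h:ℝ) * α * (p:ℝ) : ℝ) : ℂ)
          = (((h:ℝ) * S k : ℝ) : ℂ) + (((h:ℝ) * T k * (p:ℝ) : ℝ) : ℂ) + (M : ℂ) := by
        exact_mod_cast congrArg Complex.ofReal hreal
      have hexp : Complex.exp (2 * Real.pi * Complex.I * (((h:ℝ) * α * (p:ℝ) : ℝ):ℂ))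
          = c * Complex.exp (2 * Real.pi * Complex.I * (((h:ℝ) * T k * (p:ℝ) : ℝ):ℂ)) := by
        rw [hcast, mul_add, mul_add, Complex.exp_add, Complex.exp_add]
        have hM1 : Complex.exp (2 * (Real.pi:ℂ) * Complex.I * (M:ℂ)) = 1 := by
          rw [mul_comm (2 * (Real.pi:ℂ) * Complex.I) (M:ℂ)]
          exact Complex.exp_nat_mul_two_pi_mul_I M
        rw [hM1, mul_one, hcdef]
      have hyprod : (0:ℝ) ≤ (h:ℝ) * T k * (p:ℝ) :=
        mul_nonneg (mul_nonneg (by positivity) hTk) (by positivity)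
      have hynn : 0 ≤ 2 * Real.pi * ((h:ℝ) * T k * (p:ℝ)) :=
        mul_nonneg (by positivity) hyprod
      have hyle : 2 * Real.pi * ((h:ℝ) * T k * (p:ℝ)) ≤ ε := by
        have hple : (p:ℝ) ≤ (Q:ℝ) := by
          have : p ≤ Q := hpmono (by omega)
          exact_mod_cast this
        have h9 : (0:ℝ) ≤ 2 * Real.pi * (h:ℝ) * T k :=
          mul_nonneg (by positivity) hTk
        calc 2 * Real.pi * ((h:ℝ) * T k * (p:ℝ)) = (2 * Real.pi * (h:ℝ) * T k) * (p:ℝ) := by ring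
          _ ≤ (2 * Real.pi * (h:ℝ) * T k) * (Q:ℝ) := mul_le_mul_of_nonneg_left hple h9
          _ = ε := by rw [hεdef]
      have habs1 : |2 * Real.pi * ((h:ℝ) * T k * (p:ℝ))| ≤ 1 := by
        rw [abs_of_nonneg hynn]
        linarith
      have hb := aux_exp_sub_one habs1
      rw [abs_of_nonneg hynn] at hb
      calc ‖Complex.exp (2 * Real.pi * Complex.I *
              (((h:ℝ) * α * (p:ℝ) : ℝ) : ℂ)) - c‖
          = ‖c * (Complex.exp (2 * Real.pi * Complex.I *
              (((h:ℝ) * T k * (p:ℝ) : ℝ):ℂ)) - 1)‖ := by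
            rw [hexp, mul_sub_one]
        _ = ‖Complex.exp (2 * Real.pi * Complex.I *
              (((h:ℝ) * T k * (p:ℝ) : ℝ):ℂ)) - 1‖ := by
            rw [norm_mul, hcdef, aux_abs_exp, one_mul]
        _ ≤ 2 * (2 * Real.pi * ((h:ℝ) * T k * (p:ℝ))) := hb
        _ ≤ 2 * ε := by linarith
    set E : ℂ := ∑ n ∈ Finset.Icc 1 N, Complex.exp (2 * Real.pi * Complex.I *
      (((h:ℝ) * α * primeSeq (n + mm0) : ℝ) : ℂ)) with hEdef
    have hcard : (Finset.Icc 1 N).card = N := by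
      rw [Nat.card_Icc]
      omega
    have hsum1 : ‖E - (N:ℂ) * c‖ ≤ N * (2*ε) := by
      have hconst : ((N:ℂ)) * c = ∑ _n ∈ Finset.Icc 1 N, c := by
        rw [Finset.sum_const, hcard, nsmul_eq_mul]
      rw [hEdef, hconst, ← Finset.sum_sub_distrib]
      refine le_trans (norm_sum_le _ _) ?_
      refine le_trans (Finset.sum_le_sum hterm) ?_
      rw [Finset.sum_const, hcard, nsmul_eq_mul]
    have hNc : ‖(N:ℂ) * c‖ = N := by
      rw [norm_mul, Complex.norm_natCast, hcdef, aux_abs_exp, mul_one]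
    have hEabs : (N:ℝ) - N*(2*ε) ≤ ‖E‖ := by
      have h1 : ‖(N:ℂ)*c‖ - ‖E‖ ≤ ‖(N:ℂ)*c - E‖ :=
        norm_sub_norm_le _ _
      have h2 : ‖(N:ℂ)*c - E‖ = ‖E - (N:ℂ)*c‖ :=
        norm_sub_rev _ _
      rw [h2, hNc] at h1
      linarith
    have hval : 1 - 1/(N:ℝ) ≤ ‖(N:ℂ)⁻¹ * E‖ := by
      have h3 : ‖(N:ℂ)⁻¹ * E‖ = (N:ℝ)⁻¹ * ‖E‖ := by
        rw [norm_mul, norm_inv, Complex.norm_natCast]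
      rw [h3]
      calc 1 - 1/(N:ℝ) ≤ 1 - 2*ε := by linarith
        _ = (N:ℝ)⁻¹ * ((N:ℝ) - N*(2*ε)) := by
            field_simp
        _ ≤ (N:ℝ)⁻¹ * ‖E‖ := mul_le_mul_of_nonneg_left hEabs (by positivity)
    exact le_trans hval (le_ciSup (hBdd N) mm0)
  have hg1 : Filter.Tendsto (fun N:ℕ => 1 - 1/(N:ℝ)) Filter.atTop (nhds 1) := by
    have h1 := tendsto_one_div_atTop_nhds_zero_nat (𝕜 := ℝ)
    have h2 := Filter.Tendsto.const_sub (1:ℝ) h1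
    simpa using h2
  refine tendsto_of_tendsto_of_tendsto_of_le_of_le' hg1 tendsto_const_nhds ?_ ?_
  · filter_upwards [Filter.eventually_ge_atTop 1] with N hN using key N hN
  · filter_upwards with N
    exact ciSup_le fun mm => hub N mm
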